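/- arXiv:1905.12125 — 6 statements merged into one kernel-verified Lean document; each statement's English description precedes it below -/
import Mathlib

section
/- If (f1, f2, f3) solves the symmetric Painlevé IV system f1' = f1(f2 - f3) + α1, f2' = f2(f3 - f1) + α2, f3' = f3(f1 - f2) + α3 with α1 + α2 + α3 = 1, and w(z) = -√2 · f1(√2 · z), then w satisfies the fourth Painlevé equation w'' = (w')²/(2w) + (3/2)w³ + 4zw² + 2(z² - α)w + β/w with parameters α = α3 - α2 and β = -2α1². -/
/-- If `(f1, f2, f3)` solves the symmetric Painlevé IV system (with
`α1 + α2 + α3 = 1` and `f1 + f2 + f3 = x`), and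
`w(z) = -√2 · f1(√2 · z)`, then `w` satisfies the fourth Painlevé equation
`w'' = (w')²/(2w) + (3/2)w³ + 4zw² + 2(z² - α)w + β/w`
with `α = α3 - α2` and `β = -2α1²`. -/
theorem sPIV_gives_PIV
    (α1 α2 α3 α β : ℝ) (hsum : α1 + α2 + α3 = 1)
    (hα : α = α3 - α2) (hβ : β = -2 * α1 ^ 2)
    (I : Set ℝ) (hIopen : IsOpen I)
    (f1 f2 f3 : ℝ → ℝ)
    (h1 : ∀ x ∈ I, HasDerivAt f1 (f1 x * (f2 x - f3 x) + α1) x)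
    (h2 : ∀ x ∈ I, HasDerivAt f2 (f2 x * (f3 x - f1 x) + α2) x)
    (h3 : ∀ x ∈ I, HasDerivAt f3 (f3 x * (f1 x - f2 x) + α3) x)
    (hcon : ∀ x ∈ I, f1 x + f2 x + f3 x = x)
    (hne : ∀ x ∈ I, f1 x ≠ 0)
    (w : ℝ → ℝ)
    (hw : ∀ z : ℝ, w z = -Real.sqrt 2 * f1 (Real.sqrt 2 * z)) :
    ∀ z : ℝ, Real.sqrt 2 * z ∈ I →
      w z ≠ 0 ∧
      deriv (deriv w) z =
        (deriv w z) ^ 2 / (2 * w z) + (3 / 2) * (w z) ^ 3 + 4 * z * (w z) ^ 2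
          + 2 * (z ^ 2 - α) * w z + β / w z := by
  intro z hz
  set s := Real.sqrt 2 with hsdef
  have hs : s ^ 2 = 2 := Real.sq_sqrt (by norm_num)
  have hs0 : s ≠ 0 := by
    intro h; rw [h] at hs; norm_num at hs
  have hwz : w z = -s * f1 (s * z) := hw z
  have hF1 : f1 (s * z) ≠ 0 := hne _ hz
  have hw0 : w z ≠ 0 := by
    rw [hwz]
    exact mul_ne_zero (neg_ne_zero.mpr hs0) hF1
  refine ⟨hw0, ?_⟩
  -- the open preimage
  set U : Set ℝ := (fun t => s * t) ⁻¹' I with hUdef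
  have hU : IsOpen U := hIopen.preimage (continuous_const.mul continuous_id)
  have hzU : z ∈ U := hz
  have hwfun : w = fun t => -s * f1 (s * t) := funext hw
  -- inner linear map derivative
  have hlin : ∀ t : ℝ, HasDerivAt (fun t => s * t) s t := by
    intro t; simpa using (hasDerivAt_id t).const_mul s
  -- first derivative of w on U
  have hderivW : ∀ t ∈ U, HasDerivAt w
      (-2 * (f1 (s * t) * (f2 (s * t) - f3 (s * t)) + α1)) t := by
    intro t ht
    have hcomp : HasDerivAt (fun t => f1 (s * t))
        ((f1 (s * t) * (f2 (s * t) - f3 (s * t)) + α1) * s) t :=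
      (h1 (s * t) ht).comp t (hlin t)
    have := hcomp.const_mul (-s)
    rw [hwfun]
    have e : -2 * (f1 (s * t) * (f2 (s * t) - f3 (s * t)) + α1)
        = -s * ((f1 (s * t) * (f2 (s * t) - f3 (s * t)) + α1) * s) := by
      linear_combination (f1 (s * t) * (f2 (s * t) - f3 (s * t)) + α1) * hs
    rw [e]; exact this
  have hdw : ∀ t ∈ U, deriv w t
      = -2 * (f1 (s * t) * (f2 (s * t) - f3 (s * t)) + α1) :=
    fun t ht => (hderivW t ht).deriv
  -- second derivative of w at z
  have hA : HasDerivAt (fun t => f1 (s * t))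
      ((f1 (s * z) * (f2 (s * z) - f3 (s * z)) + α1) * s) z :=
    (h1 (s * z) hz).comp z (hlin z)
  have hB : HasDerivAt (fun t => f2 (s * t))
      ((f2 (s * z) * (f3 (s * z) - f1 (s * z)) + α2) * s) z :=
    (h2 (s * z) hz).comp z (hlin z)
  have hC : HasDerivAt (fun t => f3 (s * t))
      ((f3 (s * z) * (f1 (s * z) - f2 (s * z)) + α3) * s) z :=
    (h3 (s * z) hz).comp z (hlin z)
  have hD : HasDerivAt (fun t => -2 * (f1 (s * t) * (f2 (s * t) - f3 (s * t)) + α1))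
      (-2 * (((f1 (s * z) * (f2 (s * z) - f3 (s * z)) + α1) * s) * (f2 (s * z) - f3 (s * z))
        + f1 (s * z) * ((f2 (s * z) * (f3 (s * z) - f1 (s * z)) + α2) * s
          - (f3 (s * z) * (f1 (s * z) - f2 (s * z)) + α3) * s))) z := by
    exact ((hA.mul (hB.sub hC)).add_const α1).const_mul (-2)
  have hev : deriv w =ᶠ[nhds z]
      (fun t => -2 * (f1 (s * t) * (f2 (s * t) - f3 (s * t)) + α1)) :=
    Filter.eventuallyEq_of_mem (hU.mem_nhds hzU) hdw
  have hdd : deriv (deriv w) z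
      = -2 * (((f1 (s * z) * (f2 (s * z) - f3 (s * z)) + α1) * s) * (f2 (s * z) - f3 (s * z))
        + f1 (s * z) * ((f2 (s * z) * (f3 (s * z) - f1 (s * z)) + α2) * s
          - (f3 (s * z) * (f1 (s * z) - f2 (s * z)) + α3) * s)) := by
    rw [hev.deriv_eq]
    exact hD.deriv
  have hdwz : deriv w z = -2 * (f1 (s * z) * (f2 (s * z) - f3 (s * z)) + α1) :=
    hdw z hzU
  have hF3 : f3 (s * z) = s * z - f1 (s * z) - f2 (s * z) := by
    have := hcon (s * z) hz; linarith
  -- key identity, multiplied through by 2 * w z (no square roots survive)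
  have KK : deriv (deriv w) z * (2 * w z)
      = (deriv w z) ^ 2 + 3 * (w z) ^ 4 + 8 * z * (w z) ^ 3
        + 4 * (z ^ 2 - α) * (w z) ^ 2 + 2 * β := by
    rw [hdd, hdwz, hwz, hF3, hα, hβ]
    linear_combination (-4 * f1 (s*z) * s * z * α1 + 8 * f1 (s*z) * f2 (s*z) * α1
      + 4 * (f1 (s*z))^2 * α1 + 4 * (f1 (s*z))^2 * s^2 * z^2
      - 8 * (f1 (s*z))^2 * f2 (s*z) * s * z + 8 * (f1 (s*z))^2 * (f2 (s*z))^2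
      - 4 * (f1 (s*z))^3 * s * z + 8 * (f1 (s*z))^3 * f2 (s*z)
      + 2 * (f1 (s*z))^4 - 3 * (f1 (s*z))^4 * s^2) * hs
  -- now conclude by field arithmetic
  have h2w : (2 : ℝ) * w z ≠ 0 := mul_ne_zero two_ne_zero hw0
  have hfin : deriv (deriv w) z
      = ((deriv w z) ^ 2 + 3 * (w z) ^ 4 + 8 * z * (w z) ^ 3
        + 4 * (z ^ 2 - α) * (w z) ^ 2 + 2 * β) / (2 * w z) := by
    rw [eq_div_iff h2w]; exact KK
  rw [hfin]
  field_simp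
  ring
end

section
/- If (f1, f2, f3) solves the symmetric Painlevé IV system with parameters (α1, α2, α3) and constraint f1 + f2 + f3 = x, and f1 is nonvanishing, then the transformed triple τ(f) = (f1, f2 + α1/f1, f3 - α1/f1) solves the symmetric Painlevé IV system with parameters (-α1, α2 + α1, α3 + α1) and the same constraint. -/
/-- The Bäcklund transformation `τ` of the symmetric Painlevé IV system:
`τ(f) = (f1, f2 + α1/f1, f3 - α1/f1)` solves the system with parameters
`(-α1, α2 + α1, α3 + α1)` and the same constraint. -/
theorem sPIV_tau_transformation
    (α1 α2 α3 : ℝ) (hsum : α1 + α2 + α3 = 1)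
    (I : Set ℝ) (f1 f2 f3 : ℝ → ℝ)
    (h1 : ∀ x ∈ I, HasDerivAt f1 (f1 x * (f2 x - f3 x) + α1) x)
    (h2 : ∀ x ∈ I, HasDerivAt f2 (f2 x * (f3 x - f1 x) + α2) x)
    (h3 : ∀ x ∈ I, HasDerivAt f3 (f3 x * (f1 x - f2 x) + α3) x)
    (hcon : ∀ x ∈ I, f1 x + f2 x + f3 x = x)
    (hne : ∀ x ∈ I, f1 x ≠ 0)
    (g1 g2 g3 : ℝ → ℝ)
    (hg1 : ∀ x, g1 x = f1 x)
    (hg2 : ∀ x, g2 x = f2 x + α1 / f1 x)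
    (hg3 : ∀ x, g3 x = f3 x - α1 / f1 x) :
    ∀ x ∈ I,
      HasDerivAt g1 (g1 x * (g2 x - g3 x) + (-α1)) x ∧
      HasDerivAt g2 (g2 x * (g3 x - g1 x) + (α2 + α1)) x ∧
      HasDerivAt g3 (g3 x * (g1 x - g2 x) + (α3 + α1)) x ∧
      g1 x + g2 x + g3 x = x := by
  have hg1' : g1 = f1 := funext hg1
  have hg2' : g2 = fun x => f2 x + α1 / f1 x := funext hg2
  have hg3' : g3 = fun x => f3 x - α1 / f1 x := funext hg3
  intro x hx
  have hf1 := h1 x hx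
  have hf2 := h2 x hx
  have hf3 := h3 x hx
  have hne' := hne x hx
  have hq : HasDerivAt (fun x => α1 / f1 x)
      ((0 * f1 x - α1 * (f1 x * (f2 x - f3 x) + α1)) / (f1 x) ^ 2) x :=
    (hasDerivAt_const x α1).div hf1 hne'
  subst hg1' hg2' hg3'
  refine ⟨?_, ?_, ?_, ?_⟩
  · convert hf1 using 1
    field_simp
    ring
  · refine (hf2.add hq).congr_deriv ?_
    field_simp
    ring
  · refine (hf3.sub hq).congr_deriv ?_
    field_simp
    ring
  · have := hcon x hx
    simp only []
    linarith
end

section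
/- The rational functions f1(x) = (x² - 3)/(3x), f2(x) = x(x² + 3)/(3(x² - 3)), f3(x) = (x⁴ - 6x² - 9)/(3x(x² - 3)) solve the symmetric Painlevé IV system with parameters α1 = -2/3, α2 = 1/3, α3 = 4/3 and satisfy f1 + f2 + f3 = x, on any interval avoiding x = 0 and x = ±√3. -/
/-- The rational functions `f1 = (x²-3)/(3x)`, `f2 = x(x²+3)/(3(x²-3))`,
`f3 = (x⁴-6x²-9)/(3x(x²-3))` solve the symmetric Painlevé IV system with
`α1 = -2/3`, `α2 = 1/3`, `α3 = 4/3` and satisfy `f1 + f2 + f3 = x`,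
away from `x = 0` and `x = ±√3`. -/
theorem sPIV_rational_solution_face
    (f1 f2 f3 : ℝ → ℝ)
    (hf1 : ∀ x, f1 x = (x ^ 2 - 3) / (3 * x))
    (hf2 : ∀ x, f2 x = x * (x ^ 2 + 3) / (3 * (x ^ 2 - 3)))
    (hf3 : ∀ x, f3 x = (x ^ 4 - 6 * x ^ 2 - 9) / (3 * x * (x ^ 2 - 3))) :
    ∀ x : ℝ, x ≠ 0 → x ^ 2 ≠ 3 →
      HasDerivAt f1 (f1 x * (f2 x - f3 x) + (-2 / 3)) x ∧
      HasDerivAt f2 (f2 x * (f3 x - f1 x) + 1 / 3) x ∧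
      HasDerivAt f3 (f3 x * (f1 x - f2 x) + 4 / 3) x ∧
      f1 x + f2 x + f3 x = x := by
  intro x hx hx3
  have hx3' : x ^ 2 - 3 ≠ 0 := sub_ne_zero.mpr hx3
  have hxx : 3 * x ≠ 0 := by positivity
  have hd2 : 3 * (x ^ 2 - 3) ≠ 0 := by
    exact mul_ne_zero (by norm_num) hx3'
  have hd3 : 3 * x * (x ^ 2 - 3) ≠ 0 := mul_ne_zero hxx hx3'
  have hX : HasDerivAt (fun y : ℝ => y) 1 x := hasDerivAt_id x
  have h1 : HasDerivAt f1 ((2 * x ^ (2-1) * (3 * x) - (x ^ 2 - 3) * 3) / (3 * x) ^ 2) x := by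
    have := ((hX.pow 2).sub_const 3).div ((hX.const_mul 3)) hxx
    simp only [Nat.cast_ofNat, pow_one, mul_one] at this
    exact (funext hf1 : f1 = _) ▸ this
  have h2 : HasDerivAt f2
      (((1 * (x ^ 2 + 3) + x * (2 * x ^ (2-1))) * (3 * (x ^ 2 - 3)) -
        x * (x ^ 2 + 3) * (3 * (2 * x ^ (2-1)))) / (3 * (x ^ 2 - 3)) ^ 2) x := by
    have := (hX.mul ((hX.pow 2).add_const 3)).div
      (((hX.pow 2).sub_const 3).const_mul 3) hd2
    simp only [Nat.cast_ofNat, pow_one, mul_one] at this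
    exact (funext hf2 : f2 = _) ▸ this
  have h3 : HasDerivAt f3
      (((4 * x ^ 3 - 6 * (2 * x)) * (3 * x * (x ^ 2 - 3)) -
        (x ^ 4 - 6 * x ^ 2 - 9) * (3 * (x ^ 2 - 3) + 3 * x * (2 * x ^ (2-1)))) /
        (3 * x * (x ^ 2 - 3)) ^ 2) x := by
    have hnum : HasDerivAt (fun y : ℝ => y ^ 4 - 6 * y ^ 2 - 9)
        (4 * x ^ 3 - 6 * (2 * x)) x := by
      have := ((hX.pow 4).sub ((hX.pow 2).const_mul 6)).sub_const 9
      simpa using this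
    have hden : HasDerivAt (fun y : ℝ => 3 * y * (y ^ 2 - 3))
        (3 * (x ^ 2 - 3) + 3 * x * (2 * x ^ (2-1))) x := by
      have := ((hX.const_mul 3).mul ((hX.pow 2).sub_const 3))
      exact this.congr_deriv (by simp)
    have := hnum.div hden hd3
    exact (funext hf3 : f3 = _) ▸ this
  refine ⟨?_, ?_, ?_, ?_⟩
  · convert h1 using 1
    rw [hf1, hf2, hf3]; field_simp; ring
  · convert h2 using 1
    rw [hf1, hf2, hf3]; field_simp; ring
  · convert h3 using 1
    rw [hf1, hf2, hf3]; field_simp; ring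
  · rw [hf1, hf2, hf3]; field_simp; ring
end

section
/- The rational functions f1(x) = 2x(x² - 3)(x² + 1)/((x² - 1)(x⁴ + 3)), f2(x) = -2x(x² - 1)(x² + 3)/((x² + 1)(x⁴ + 3)), f3(x) = x(x⁴ + 3)/((x² - 1)(x² + 1)) solve the symmetric Painlevé IV system with parameters α1 = 2, α2 = 2, α3 = -3 and satisfy f1 + f2 + f3 = x, on any real interval avoiding x = ±1. -/
/-- A rational solution of the symmetric Painlevé IV system with parameters
`α1 = α2 = 2`, `α3 = -3`, valid away from `x = ±1`. -/
theorem sPIV_rational_solution_vertex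
    (f1 f2 f3 : ℝ → ℝ)
    (hf1 : ∀ x, f1 x = 2 * x * (x ^ 2 - 3) * (x ^ 2 + 1) / ((x ^ 2 - 1) * (x ^ 4 + 3)))
    (hf2 : ∀ x, f2 x = -2 * x * (x ^ 2 - 1) * (x ^ 2 + 3) / ((x ^ 2 + 1) * (x ^ 4 + 3)))
    (hf3 : ∀ x, f3 x = x * (x ^ 4 + 3) / ((x ^ 2 - 1) * (x ^ 2 + 1))) :
    ∀ x : ℝ, x ^ 2 ≠ 1 →
      HasDerivAt f1 (f1 x * (f2 x - f3 x) + 2) x ∧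
      HasDerivAt f2 (f2 x * (f3 x - f1 x) + 2) x ∧
      HasDerivAt f3 (f3 x * (f1 x - f2 x) + (-3)) x ∧
      f1 x + f2 x + f3 x = x := by
  have e1 : f1 = fun x => 2 * x * (x ^ 2 - 3) * (x ^ 2 + 1) / ((x ^ 2 - 1) * (x ^ 4 + 3)) :=
    funext hf1
  have e2 : f2 = fun x => -2 * x * (x ^ 2 - 1) * (x ^ 2 + 3) / ((x ^ 2 + 1) * (x ^ 4 + 3)) :=
    funext hf2
  have e3 : f3 = fun x => x * (x ^ 4 + 3) / ((x ^ 2 - 1) * (x ^ 2 + 1)) := funext hf3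
  subst e1 e2 e3
  intro x hx
  have h1 : (x ^ 2 - 1 : ℝ) ≠ 0 := sub_ne_zero.mpr hx
  have h2 : (x ^ 2 + 1 : ℝ) ≠ 0 := by positivity
  have h3 : (x ^ 4 + 3 : ℝ) ≠ 0 := by positivity
  have hid : HasDerivAt (fun y : ℝ => y) 1 x := hasDerivAt_id x
  have hp2 : HasDerivAt (fun y : ℝ => y ^ 2) (2 * x ^ 1) x := hasDerivAt_pow 2 x
  have hp4 : HasDerivAt (fun y : ℝ => y ^ 4) (4 * x ^ 3) x := hasDerivAt_pow 4 x
  have hA : HasDerivAt (fun y : ℝ => y ^ 2 - 1) (2 * x ^ 1) x := by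
    simpa using hp2.sub_const 1
  have hB : HasDerivAt (fun y : ℝ => y ^ 2 + 1) (2 * x ^ 1) x := hp2.add_const 1
  have hC : HasDerivAt (fun y : ℝ => y ^ 2 + 3) (2 * x ^ 1) x := hp2.add_const 3
  have hE : HasDerivAt (fun y : ℝ => y ^ 2 - 3) (2 * x ^ 1) x := by
    simpa using hp2.sub_const 3
  have hF : HasDerivAt (fun y : ℝ => y ^ 4 + 3) (4 * x ^ 3) x := hp4.add_const 3
  constructor
  · have hN : HasDerivAt (fun y : ℝ => 2 * y * (y ^ 2 - 3) * (y ^ 2 + 1))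
        ((2 * 1 * (x ^ 2 - 3) + 2 * x * (2 * x ^ 1)) * (x ^ 2 + 1)
          + 2 * x * (x ^ 2 - 3) * (2 * x ^ 1)) x :=
      (((hid.const_mul 2).mul hE).mul hB)
    have hD : HasDerivAt (fun y : ℝ => (y ^ 2 - 1) * (y ^ 4 + 3))
        (2 * x ^ 1 * (x ^ 4 + 3) + (x ^ 2 - 1) * (4 * x ^ 3)) x := hA.mul hF
    have := hN.div hD (mul_ne_zero h1 h3)
    refine this.congr_deriv ?_
    field_simp
    ring
  constructor
  · have hN : HasDerivAt (fun y : ℝ => -2 * y * (y ^ 2 - 1) * (y ^ 2 + 3))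
        ((-2 * 1 * (x ^ 2 - 1) + -2 * x * (2 * x ^ 1)) * (x ^ 2 + 3)
          + -2 * x * (x ^ 2 - 1) * (2 * x ^ 1)) x :=
      (((hid.const_mul (-2)).mul hA).mul hC)
    have hD : HasDerivAt (fun y : ℝ => (y ^ 2 + 1) * (y ^ 4 + 3))
        (2 * x ^ 1 * (x ^ 4 + 3) + (x ^ 2 + 1) * (4 * x ^ 3)) x := hB.mul hF
    have := hN.div hD (mul_ne_zero h2 h3)
    refine this.congr_deriv ?_
    field_simp
    ring
  constructor
  · have hN : HasDerivAt (fun y : ℝ => y * (y ^ 4 + 3))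
        (1 * (x ^ 4 + 3) + x * (4 * x ^ 3)) x := hid.mul hF
    have hD : HasDerivAt (fun y : ℝ => (y ^ 2 - 1) * (y ^ 2 + 1))
        (2 * x ^ 1 * (x ^ 2 + 1) + (x ^ 2 - 1) * (2 * x ^ 1)) x := hA.mul hB
    have := hN.div hD (mul_ne_zero h1 h2)
    refine this.congr_deriv ?_
    field_simp
    ring
  · field_simp
    ring
end

section
/- The rational functions f1(x) = 2x(x² - 3)(x² + 1)/((x² - 1)(x⁴ + 3)), f2(x) = -2x(x² - 1)(x² + 3)/((x² + 1)(x⁴ + 3)), f3(x) = x(x⁴ + 3)/((x² - 1)(x² + 1)) satisfy the polynomial identities f1²f2f3² + f1²f3 - 5f1f2f3 - f1f3² - 3f1 + 6f2 + 2f3 = 0 and f1f2²f3² + 5f1f2f3 - f2²f3 + f2f3² + 6f1 - 3f2 + 2f3 = 0 for all real x with x² ≠ 1. -/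
namespace SPIVRational

variable {K : Type*} [Field K]

def f₁ (x : K) : K := 2 * x * (x ^ 2 - 3) * (x ^ 2 + 1) / ((x ^ 2 - 1) * (x ^ 4 + 3))

def f₂ (x : K) : K := -2 * x * (x ^ 2 - 1) * (x ^ 2 + 3) / ((x ^ 2 + 1) * (x ^ 4 + 3))

def f₃ (x : K) : K := x * (x ^ 4 + 3) / ((x ^ 2 - 1) * (x ^ 2 + 1))

variable {x : K}

theorem first_identity (h₁ : x ^ 2 - 1 ≠ 0) (h₂ : x ^ 2 + 1 ≠ 0) (h₃ : x ^ 4 + 3 ≠ 0) :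
    f₁ x ^ 2 * f₂ x * f₃ x ^ 2 + f₁ x ^ 2 * f₃ x - 5 * f₁ x * f₂ x * f₃ x
      - f₁ x * f₃ x ^ 2 - 3 * f₁ x + 6 * f₂ x + 2 * f₃ x = 0 := by
  unfold f₁ f₂ f₃
  field_simp
  ring

theorem second_identity (h₁ : x ^ 2 - 1 ≠ 0) (h₂ : x ^ 2 + 1 ≠ 0) (h₃ : x ^ 4 + 3 ≠ 0) :
    f₁ x * f₂ x ^ 2 * f₃ x ^ 2 + 5 * f₁ x * f₂ x * f₃ x - f₂ x ^ 2 * f₃ x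
      + f₂ x * f₃ x ^ 2 + 6 * f₁ x - 3 * f₂ x + 2 * f₃ x = 0 := by
  unfold f₁ f₂ f₃
  field_simp
  ring

end SPIVRational

open SPIVRational in
/-- Polynomial identities satisfied by the components of the rational solution
with parameters `α1 = α2 = 2`, `α3 = -3`. -/
theorem sPIV_rational_solution_vertex_polynomial_identities
    (f1 f2 f3 : ℝ → ℝ)
    (hf1 : ∀ x, f1 x = 2 * x * (x ^ 2 - 3) * (x ^ 2 + 1) / ((x ^ 2 - 1) * (x ^ 4 + 3)))
    (hf2 : ∀ x, f2 x = -2 * x * (x ^ 2 - 1) * (x ^ 2 + 3) / ((x ^ 2 + 1) * (x ^ 4 + 3)))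
    (hf3 : ∀ x, f3 x = x * (x ^ 4 + 3) / ((x ^ 2 - 1) * (x ^ 2 + 1))) :
    ∀ x : ℝ, x ^ 2 ≠ 1 →
      (f1 x) ^ 2 * f2 x * (f3 x) ^ 2 + (f1 x) ^ 2 * f3 x - 5 * f1 x * f2 x * f3 x
        - f1 x * (f3 x) ^ 2 - 3 * f1 x + 6 * f2 x + 2 * f3 x = 0 ∧
      f1 x * (f2 x) ^ 2 * (f3 x) ^ 2 + 5 * f1 x * f2 x * f3 x - (f2 x) ^ 2 * f3 x
        + f2 x * (f3 x) ^ 2 + 6 * f1 x - 3 * f2 x + 2 * f3 x = 0 := by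
  intro x hx
  have h₁ : x ^ 2 - 1 ≠ 0 := sub_ne_zero.mpr hx
  have h₂ : x ^ 2 + 1 ≠ 0 := by positivity
  have h₃ : x ^ 4 + 3 ≠ 0 := by positivity
  rw [hf1, hf2, hf3]
  exact ⟨first_identity h₁ h₂ h₃, second_identity h₁ h₂ h₃⟩
end

section
/- Consider doubly infinite sequences s : ℤ → {A1, A2, A3} avoiding the forbidden consecutive pairs (A_iA_i for each i, A2A1A2, A3A2A3, A1A3A1 as length-3 subwords). Then s is either a doubly infinite repetition of A1A2A3, a doubly infinite repetition of A3A2A1, or there exists a unique index set around which s has the form ...A1A2A3 A1A2A3 [center] A3A2A1 A3A2A1..., where the center is one of: A1, or A1A2A1, or A1A2A3A2A1, up to cyclic relabeling of the symbols A1A2A3. -/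
/- We encode the alphabet `{A1, A2, A3}` as `Fin 3` (`A1 = 0`, `A2 = 1`,
`A3 = 2`).  The forbidden length-2 factors are `XX`, and the forbidden
length-3 factors `A2A1A2`, `A3A2A3`, `A1A3A1` are exactly those of the form
`x y x` with `x = y + 1` (mod 3).  Cyclic relabeling `A1→A2→A3→A1` is
addition of a constant `c : Fin 3`. -/

/-- A doubly infinite word avoiding the forbidden factors. -/
def AdmissibleZWord (s : ℤ → Fin 3) : Prop :=
  (∀ n : ℤ, s (n + 1) ≠ s n) ∧
  (∀ n : ℤ, ¬ (s n = s (n + 1) + 1 ∧ s (n + 2) = s n))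

open Fin.CommRing in
/-- Model word with center `A1` at index 0:
`...A1A2A3 A1A2A3 [A1] A3A2A1 A3A2A1...`. -/
def centerWord1 (n : ℤ) : Fin 3 := if 0 ≤ n then ((-n : ℤ) : Fin 3) else ((n : ℤ) : Fin 3)

open Fin.CommRing in
/-- Model word with center `A1A2A1` at indices 0,1,2:
`...A1A2A3 [A1A2A1] A3A2A1...`. -/
def centerWord2 (n : ℤ) : Fin 3 :=
  if n ≤ 0 then ((n : ℤ) : Fin 3) else if n = 1 then 1 else ((2 - n : ℤ) : Fin 3)

open Fin.CommRing in
/-- Model word with center `A1A2A3A2A1` at indices 0,…,4: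
`...A1A2A3 [A1A2A3A2A1] A3A2A1...`. -/
def centerWord3 (n : ℤ) : Fin 3 :=
  if n ≤ 2 then ((n : ℤ) : Fin 3) else ((4 - n : ℤ) : Fin 3)

/-- The three model words. -/
def centerWord : Fin 3 → ℤ → Fin 3
  | 0 => centerWord1
  | 1 => centerWord2
  | 2 => centerWord3

/-- Classification of doubly infinite singularity sequences: an admissible
doubly infinite word is either a doubly infinite repetition of `A1A2A3`, or a
doubly infinite repetition of `A3A2A1`, or it has the form
`...A1A2A3 A1A2A3 [center] A3A2A1 A3A2A1...` with center `A1`, `A1A2A1`, or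
`A1A2A3A2A1`, up to a cyclic relabeling of the letters, with the placement
(translation of the index and relabeling) being uniquely determined. -/
theorem doubly_infinite_singularity_sequences (s : ℤ → Fin 3)
    (hs : AdmissibleZWord s) :
    (∀ n : ℤ, s (n + 1) = s n + 1) ∨
    (∀ n : ℤ, s (n + 1) = s n + 2) ∨
    (∃ i : Fin 3, ∃! q : ℤ × Fin 3,
      ∀ n : ℤ, s n = centerWord i (n - q.1) + q.2) := by
  classical
  letI : CommRing (Fin 3) := Fin.instCommRing 3
  obtain ⟨h1, h2⟩ := hs
  have fact1 : ∀ x y : Fin 3, x ≠ y → x - y = 1 ∨ x - y = 2 := by decide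
  have fact2 : ∀ a b c : Fin 3, ¬(a = b + 1 ∧ c = a) → b - a = 2 → c - b ≠ 1 := by decide
  have hd12 : ∀ n : ℤ, s (n + 1) - s n = 1 ∨ s (n + 1) - s n = 2 :=
    fun n => fact1 _ _ (h1 n)
  have hd2 : ∀ n : ℤ, s (n + 1) - s n = 2 → s (n + 1 + 1) - s (n + 1) = 2 := by
    intro n h
    have e : n + 1 + 1 = n + 2 := by ring
    rw [e]
    rcases hd12 (n + 1) with h' | h'
    · rw [show n + 1 + 1 = n + 2 by ring] at h'
      exact absurd h' (fact2 (s n) (s (n + 1)) (s (n + 2)) (h2 n) h)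
    · rwa [show n + 1 + 1 = n + 2 by ring] at h'
  have hup : ∀ n : ℤ, s (n + 1) - s n = 2 → ∀ m : ℤ, n ≤ m → s (m + 1) - s m = 2 := by
    intro n h
    refine Int.le_induction (motive := fun m _ => s (m + 1) - s m = 2) h ?_
    intro m hm ih
    exact hd2 m ih
  by_cases hall1 : ∀ n : ℤ, s (n + 1) - s n = 1
  · left
    intro n
    have := hall1 n
    rw [← this]; ring
  by_cases hall2 : ∀ n : ℤ, s (n + 1) - s n = 2
  · right; left
    intro n
    have := hall2 n
    rw [← this]; ring
  right; right
  push_neg at hall1 hall2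
  obtain ⟨a, ha⟩ := hall2
  obtain ⟨b, hb⟩ := hall1
  have ha1 : s (a + 1) - s a = 1 := (hd12 a).resolve_right ha
  have hb2 : s (b + 1) - s b = 2 := (hd12 b).resolve_left hb
  obtain ⟨k, hk2, hkmin⟩ := Int.exists_least_of_bdd
    (P := fun n => s (n + 1) - s n = 2)
    ⟨a + 1, by
      intro z hz
      by_contra hc
      push_neg at hc
      have : z ≤ a := by omega
      have := hup z hz a this
      rw [this] at ha1
      exact absurd ha1 (by decide)⟩ ⟨b, hb2⟩
  have dge : ∀ n : ℤ, k ≤ n → s (n + 1) - s n = 2 := fun n h => hup k hk2 n h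
  have dlt : ∀ n : ℤ, n < k → s (n + 1) - s n = 1 := by
    intro n hn
    rcases hd12 n with h | h
    · exact h
    · exact absurd (hkmin n h) (by omega)
  -- the explicit formula
  have A : ∀ n : ℤ, k ≤ n → s n = ((k - n : ℤ) : Fin 3) + s k := by
    refine Int.le_induction (motive := fun n _ => s n = ((k - n : ℤ) : Fin 3) + s k) (by simp) ?_
    intro n hn ih
    · have hd := dge n hn
      have h2' : (2 : Fin 3) = -1 := by decide
      have : s (n + 1) = 2 + s n := by rw [← hd]; ring
      rw [this, ih, h2']
      push_cast
      ring
  have B : ∀ n : ℤ, n ≤ k → s n = ((n - k : ℤ) : Fin 3) + s k := by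
    refine Int.le_induction_down (motive := fun n _ => s n = ((n - k : ℤ) : Fin 3) + s k) (by simp) ?_
    intro n hn ih
    · have hd : s (n - 1 + 1) - s (n - 1) = 1 := dlt (n - 1) (by omega)
      rw [show n - 1 + 1 = n by ring] at hd
      have : s (n - 1) = s n - 1 := by rw [← hd]; ring
      rw [this, ih]
      push_cast
      ring
  have key : ∀ n : ℤ, s n = centerWord1 (n - k) + s k := by
    intro n
    unfold centerWord1
    by_cases hn : (0 : ℤ) ≤ n - k
    · rw [if_pos hn, show ((-(n - k) : ℤ) : Fin 3) = ((k - n : ℤ) : Fin 3) by push_cast; ring]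
      exact A n (by omega)
    · rw [if_neg hn]
      exact B n (by omega)
  have hcw : centerWord 0 = centerWord1 := rfl
  refine ⟨0, (k, s k), ?_, ?_⟩
  · intro n; rw [hcw]; exact key n
  · rintro ⟨t, c⟩ h
    rw [hcw] at h
    have e0 : s t = c := by
      have := h t
      simp only [sub_self, centerWord1, le_refl, if_pos] at this
      simpa using this
    have e1 : s (t + 1) = 2 + c := by
      have := h (t + 1)
      rw [show t + 1 - t = (1 : ℤ) by ring] at this
      simp only [centerWord1] at this
      rw [if_pos (by norm_num : (0:ℤ) ≤ 1)] at this
      rw [this, show ((-1 : ℤ) : Fin 3) = 2 by decide]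
    have em1 : s (t - 1) = 2 + c := by
      have := h (t - 1)
      rw [show t - 1 - t = (-1 : ℤ) by ring] at this
      simp only [centerWord1] at this
      rw [if_neg (by norm_num : ¬ (0:ℤ) ≤ -1)] at this
      rw [this, show ((-1 : ℤ) : Fin 3) = 2 by decide]
    have dt : s (t + 1) - s t = 2 := by rw [e1, e0]; ring
    have dtm : s (t - 1 + 1) - s (t - 1) = 1 := by
      rw [show t - 1 + 1 = t by ring, e0, em1]
      exact (by decide : ∀ x : Fin 3, x - (2 + x) = 1) c
    have ht1 : k ≤ t := hkmin t dt
    have ht2 : t ≤ k := by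
      by_contra hc
      push_neg at hc
      have := dge (t - 1) (by omega)
      rw [dtm] at this
      exact absurd this (by decide)
    have htk : t = k := le_antisymm ht2 ht1
    have : c = s k := by rw [← e0, htk]
    simp [htk, this]
end
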